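/- The matrix B = D̄_s + H^σ is positive semidefinite: for every x ∈ ℂⁿ, x* B x ≥ 0. -/

import Mathlib

open Matrix Complex

/-- Symmetrized adjacency matrix `A_s = (A + Aᵀ)/2`. -/
noncomputable def symAdj {n : ℕ} (A : Matrix (Fin n) (Fin n) ℝ) :
    Matrix (Fin n) (Fin n) ℝ :=
  fun i j => (A i j + A j i) / 2

/-- The matrix `H^σ = A_s ⊙ (ee^⊤ − sgn(|A − Aᵀ|) + i·sgn(|A| − |Aᵀ|))`, entrywise. -/
noncomputable def Hsigma {n : ℕ} (A : Matrix (Fin n) (Fin n) ℝ) :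
    Matrix (Fin n) (Fin n) ℂ :=
  fun i j => (symAdj A i j : ℂ) *
    (((1 - Real.sign |A i j - A j i| : ℝ) : ℂ) +
      Complex.I * ((Real.sign (|A i j| - |A j i|) : ℝ) : ℂ))

/-- The degree matrix `D̄_s = Diag(|A_s| e)`. -/
noncomputable def DbarS {n : ℕ} (A : Matrix (Fin n) (Fin n) ℝ) :
    Matrix (Fin n) (Fin n) ℂ :=
  Matrix.diagonal (fun i => ((∑ j, |symAdj A i j| : ℝ) : ℂ))

/-- The Sign-Magnetic Laplacian `L^σ = D̄_s − H^σ`. -/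
noncomputable def Lsigma {n : ℕ} (A : Matrix (Fin n) (Fin n) ℝ) :
    Matrix (Fin n) (Fin n) ℂ :=
  DbarS A - Hsigma A

open scoped ComplexOrder

/-!
Write `B = D̄_s + H^σ` as `diagonal (∑ⱼ |(A_s)ᵢⱼ|) + H^σ`. Each entry of `H^σ` is `(A_s)ᵢⱼ` times a
complex number of modulus at most one, so `H^σ` is a Hermitian matrix whose row sums of moduli are
bounded by those of `A_s`. For any Hermitian `M`, `diagonal (∑ⱼ ‖Mᵢⱼ‖) + M` is positive semidefinite:
`|x̄ᵢ Mᵢⱼ xⱼ| ≤ ‖Mᵢⱼ‖ |xᵢ| |xⱼ|` and `2 |xᵢ| |xⱼ| ≤ |xᵢ|² + |xⱼ|²`, summed with the symmetric weights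
`‖Mᵢⱼ‖ = ‖Mⱼᵢ‖`.
-/

theorem sum_mul_mul_le_sum_mul_sq {ι : Type*} [Fintype ι] {S : ι → ι → ℝ}
    (hS : ∀ i j, 0 ≤ S i j) (hS_symm : ∀ i j, S j i = S i j) (a : ι → ℝ) :
    ∑ i, ∑ j, S i j * (a i * a j) ≤ ∑ i, ∑ j, S i j * a i ^ 2 := by
  have h_swap : ∑ i, ∑ j, S i j * a j ^ 2 = ∑ i, ∑ j, S i j * a i ^ 2 := by
    rw [Finset.sum_comm]
    simp_rw [hS_symm]
  have h_amgm : ∑ i, ∑ j, 2 * (S i j * (a i * a j)) ≤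
      ∑ i, ∑ j, (S i j * a i ^ 2 + S i j * a j ^ 2) :=
    Finset.sum_le_sum fun i _ => Finset.sum_le_sum fun j _ => by
      nlinarith [mul_nonneg (hS i j) (sq_nonneg (a i - a j))]
  simp only [← Finset.mul_sum, Finset.sum_add_distrib, h_swap] at h_amgm
  linarith

theorem RCLike.re_star_mul_ofReal_mul {𝕜 : Type*} [RCLike 𝕜] (r : ℝ) (z : 𝕜) :
    re (star z * (r * z)) = r * ‖z‖ ^ 2 := by
  rw [mul_left_comm, star_def, conj_mul, ← ofReal_pow, ← ofReal_mul, ofReal_re]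

namespace Matrix.IsHermitian

variable {𝕜 ι : Type*} [RCLike 𝕜] [Fintype ι] [DecidableEq ι] {M : Matrix ι ι 𝕜}

theorem posSemidef_diagonal_sum_norm_add (hM : M.IsHermitian) :
    (diagonal (fun i => ((∑ j, ‖M i j‖ : ℝ) : 𝕜)) + M).PosSemidef := by
  have h_herm : (diagonal (fun i => ((∑ j, ‖M i j‖ : ℝ) : 𝕜)) + M).IsHermitian :=
    (isHermitian_diagonal_of_self_adjoint _ (by ext; simp)).add hM
  refine .of_dotProduct_mulVec_nonneg h_herm fun x => ?_
  rw [RCLike.nonneg_iff]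
  refine ⟨?_, h_herm.im_star_dotProduct_mulVec_self x⟩
  have h_expand : RCLike.re (star x ⬝ᵥ ((diagonal (fun i => ((∑ j, ‖M i j‖ : ℝ) : 𝕜)) + M) *ᵥ x))
      = ∑ i, ∑ j, ‖M i j‖ * ‖x i‖ ^ 2 + ∑ i, ∑ j, RCLike.re (star (x i) * (M i j * x j)) := by
    rw [add_mulVec, dotProduct_add, map_add]
    congr 1
    · simp only [dotProduct, mulVec_diagonal, Pi.star_apply]
      rw [map_sum]
      refine Finset.sum_congr rfl fun i _ => ?_
      rw [← Finset.sum_mul, RCLike.re_star_mul_ofReal_mul]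
    · simp only [dotProduct, mulVec, Finset.mul_sum, map_sum, Pi.star_apply]
  have h_entry (i j : ι) :
      -(‖M i j‖ * (‖x i‖ * ‖x j‖)) ≤ RCLike.re (star (x i) * (M i j * x j)) := by
    simpa only [norm_mul, norm_star, mul_left_comm ‖x i‖] using
      (abs_le.1 (RCLike.abs_re_le_norm (star (x i) * (M i j * x j)))).1
  have h_offdiag : ∑ i, ∑ j, -(‖M i j‖ * (‖x i‖ * ‖x j‖)) ≤
      ∑ i, ∑ j, RCLike.re (star (x i) * (M i j * x j)) :=
    Finset.sum_le_sum fun i _ => Finset.sum_le_sum fun j _ => h_entry i j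
  have h_amgm := sum_mul_mul_le_sum_mul_sq (fun i j => norm_nonneg (M i j))
    (fun i j => by rw [← hM.apply i j, norm_star]) (fun i => ‖x i‖)
  simp only [Finset.sum_neg_distrib] at h_offdiag
  linarith

theorem posSemidef_diagonal_add {d : ι → ℝ} (hM : M.IsHermitian)
    (hd : ∀ i, ∑ j, ‖M i j‖ ≤ d i) : (diagonal (fun i => (d i : 𝕜)) + M).PosSemidef := by
  have h_split : diagonal (fun i => (d i : 𝕜)) + M =
      diagonal (fun i => ((d i - ∑ j, ‖M i j‖ : ℝ) : 𝕜)) +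
        (diagonal (fun i => ((∑ j, ‖M i j‖ : ℝ) : 𝕜)) + M) := by
    rw [← add_assoc, diagonal_add]
    simp
  rw [h_split]
  exact .add (.diagonal fun i => RCLike.ofReal_nonneg.2 (sub_nonneg.2 (hd i)))
    hM.posSemidef_diagonal_sum_norm_add

end Matrix.IsHermitian

noncomputable def signPhase (a b : ℝ) : ℂ :=
  ((1 - Real.sign |a - b| : ℝ) : ℂ) + Complex.I * ((Real.sign (|a| - |b|) : ℝ) : ℂ)

theorem star_signPhase (a b : ℝ) : star (signPhase b a) = signPhase a b := by
  have h_sign : Real.sign (|b| - |a|) = -Real.sign (|a| - |b|) := by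
    rw [← Real.sign_neg, neg_sub]
  simp [signPhase, abs_sub_comm b a, h_sign]

theorem norm_signPhase_le (a b : ℝ) : ‖signPhase a b‖ ≤ 1 := by
  rcases eq_or_ne a b with rfl | h
  · simp [signPhase]
  · rw [signPhase, Real.sign_of_pos (abs_pos.2 (sub_ne_zero.2 h))]
    rcases Real.sign_apply_eq (|a| - |b|) with h' | h' | h' <;> simp [h']

theorem symAdj_comm {n : ℕ} (A : Matrix (Fin n) (Fin n) ℝ) (i j : Fin n) :
    symAdj A j i = symAdj A i j := by
  simp only [symAdj, add_comm]

theorem Hsigma_apply {n : ℕ} (A : Matrix (Fin n) (Fin n) ℝ) (i j : Fin n) :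
    Hsigma A i j = symAdj A i j * signPhase (A i j) (A j i) :=
  rfl

theorem isHermitian_Hsigma {n : ℕ} (A : Matrix (Fin n) (Fin n) ℝ) : (Hsigma A).IsHermitian := by
  ext i j
  simp [Hsigma_apply, symAdj_comm A i j, star_signPhase]

theorem norm_Hsigma_apply_le {n : ℕ} (A : Matrix (Fin n) (Fin n) ℝ) (i j : Fin n) :
    ‖Hsigma A i j‖ ≤ |symAdj A i j| := by
  rw [Hsigma_apply, norm_mul, Complex.norm_real, Real.norm_eq_abs]
  exact mul_le_of_le_one_right (abs_nonneg _) (norm_signPhase_le _ _)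

theorem DbarS_add_Hsigma_posSemidef_general {n : ℕ} (A : Matrix (Fin n) (Fin n) ℝ) :
    (DbarS A + Hsigma A).PosSemidef :=
  (isHermitian_Hsigma A).posSemidef_diagonal_add fun i =>
    Finset.sum_le_sum fun j _ => norm_Hsigma_apply_le A i j

/-- the matrix `B = D̄_s + H^σ` is positive semidefinite:
for every `x ∈ ℂⁿ`, `x* B x ≥ 0`. -/
theorem DbarS_add_Hsigma_posSemidef {n : ℕ} (A : Matrix (Fin n) (Fin n) ℝ)
    (hloop : ∀ i, A i i = 0) :
    (DbarS A + Hsigma A).PosSemidef :=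
  DbarS_add_Hsigma_posSemidef_general A
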